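/- Let ν be the Edwards-Sokal joint measure on spins and edges, K the stochastic matrix resampling spins given edges, and T the stochastic matrix resampling edges given spins. If the spin/edge factorization Ent_ν(f) ≤ C·(ν[Ent_ν(f|σ)] + ν[Ent_ν(f|A)]) holds for all f ≥ 0, then the reversible chain P = (K+T)/2 satisfies Ent_ν(Pf) ≤ (1 − 1/(2C))·Ent_ν(f) for all f ≥ 0. -/

import Mathlib

open scoped Classical BigOperators

noncomputable def ent {Ω : Type*} [Fintype Ω] (π f : Ω → ℝ) : ℝ :=
  (∑ x, π x * f x * Real.log (f x)) - (∑ x, π x * f x) * Real.log (∑ x, π x * f x)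

noncomputable def condMean {Ω α : Type*} [Fintype Ω] (ν : Ω → ℝ) (g : Ω → α)
    (f : Ω → ℝ) (x : Ω) : ℝ :=
  (∑ y, if g y = g x then ν y * f y else 0) / (∑ y, if g y = g x then ν y else 0)

noncomputable def avgCondEnt {Ω α : Type*} [Fintype Ω] (ν : Ω → ℝ) (g : Ω → α)
    (f : Ω → ℝ) : ℝ :=
  ∑ x, ν x * f x * (Real.log (f x) - Real.log (condMean ν g f x))

noncomputable def matMulVec {Ω : Type*} [Fintype Ω] (P : Ω → Ω → ℝ) (f : Ω → ℝ) (x : Ω) : ℝ :=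
  ∑ y, P x y * f y

noncomputable def dirForm {Ω : Type*} [Fintype Ω] (π : Ω → ℝ) (P : Ω → Ω → ℝ)
    (f g : Ω → ℝ) : ℝ :=
  ∑ x, π x * f x * (g x - matMulVec P g x)

noncomputable def stepDist {Ω : Type*} [Fintype Ω] (P : Ω → Ω → ℝ) (ζ : Ω → ℝ) (y : Ω) : ℝ :=
  ∑ x, ζ x * P x y

noncomputable def adjointMat {Ω : Type*} [Fintype Ω] (π : Ω → ℝ) (P : Ω → Ω → ℝ)
    (x y : Ω) : ℝ :=
  π y * P y x / π x

noncomputable def matComp {Ω : Type*} [Fintype Ω] (P Q : Ω → Ω → ℝ) (x y : Ω) : ℝ :=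
  ∑ z, P x z * Q z y

/-- Weight of a joint spin/edge (Edwards–Sokal) configuration: `p^{|A|}(1-p)^{|E|-|A|} 1(A ⊆ M(σ))`
with `p = 1 - e^{-β}`. -/
noncomputable def esWeight {V : Type*} [Fintype V] [DecidableEq V]
    (E : Finset (V × V)) (q : ℕ) (β : ℝ) (z : (V → Fin q) × Finset (V × V)) : ℝ :=
  (1 - Real.exp (-β)) ^ z.2.card * Real.exp (-β) ^ (E.card - z.2.card) *
    (if z.2 ⊆ E.filter (fun e => z.1 e.1 = z.1 e.2) then 1 else 0)

/-- The Edwards–Sokal joint measure. -/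
noncomputable def esMeasure {V : Type*} [Fintype V] [DecidableEq V]
    (E : Finset (V × V)) (q : ℕ) (β : ℝ) (z : (V → Fin q) × Finset (V × V)) : ℝ :=
  esWeight E q β z / ∑ w : (V → Fin q) × Finset (V × V), esWeight E q β w

/-- The ferromagnetic `q`-state Potts Gibbs measure: `μ(σ) ∝ exp(-β |D(σ)|)`. -/
noncomputable def pottsMeasure {V : Type*} [Fintype V] [DecidableEq V]
    (E : Finset (V × V)) (q : ℕ) (β : ℝ) (σ : V → Fin q) : ℝ :=
  Real.exp (-β * ((E.filter (fun e => σ e.1 ≠ σ e.2)).card : ℝ)) /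
    ∑ τ : V → Fin q, Real.exp (-β * ((E.filter (fun e => τ e.1 ≠ τ e.2)).card : ℝ))

/-- Swendsen–Wang transition matrix on spin configurations:
`P(σ,τ) = ∑_A ν(A|σ) ν(τ|A)`. -/
noncomputable def swMatrix {V : Type*} [Fintype V] [DecidableEq V]
    (E : Finset (V × V)) (q : ℕ) (β : ℝ) (σ τ : V → Fin q) : ℝ :=
  ∑ A : Finset (V × V),
    (esMeasure E q β (σ, A) / ∑ B : Finset (V × V), esMeasure E q β (σ, B)) *
    (esMeasure E q β (τ, A) / ∑ ρ : V → Fin q, esMeasure E q β (ρ, A))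

/-!
`K` and `T` are conditional expectations, so the chain rule gives
`Ent(Kf) = Ent f - ν[Ent(f|A)]` and `Ent(Tf) = Ent f - ν[Ent(f|σ)]`. Entropy is convex, hence
`Ent(Pf) ≤ (Ent(Kf) + Ent(Tf))/2 = Ent f - (ν[Ent(f|σ)] + ν[Ent(f|A)])/2`, and the factorization
bounds the last bracket below by `Ent f / C`.
-/

open Finset Real

section ConditionalExpectation

variable {Ω α : Type*} [Fintype Ω]

lemma sum_eq_sum_of_sum_fiber_eq (g : Ω → α) {φ ψ : Ω → ℝ}
    (h : ∀ x, ∑ y with g y = g x, φ y = ∑ y with g y = g x, ψ y) :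
    ∑ x, φ x = ∑ x, ψ x := by
  have hg : ∀ x ∈ (univ : Finset Ω), g x ∈ univ.image g := fun x _ =>
    mem_image_of_mem g (mem_univ x)
  rw [← sum_fiberwise_of_maps_to hg φ, ← sum_fiberwise_of_maps_to hg ψ]
  refine sum_congr rfl fun a ha => ?_
  obtain ⟨x, -, rfl⟩ := mem_image.1 ha
  exact h x

variable {ν : Ω → ℝ} {g : Ω → α}

lemma condMean_eq_of_eq (f : Ω → ℝ) {x y : Ω} (hxy : g x = g y) :
    condMean ν g f x = condMean ν g f y := by
  rw [condMean, condMean, hxy]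

lemma condMean_nonneg (hν : ∀ x, 0 ≤ ν x) {f : Ω → ℝ} (hf : ∀ x, 0 ≤ f x) (x : Ω) :
    0 ≤ condMean ν g f x :=
  div_nonneg (sum_nonneg fun y _ => by split_ifs <;> [exact mul_nonneg (hν y) (hf y); rfl])
    (sum_nonneg fun y _ => by split_ifs <;> [exact hν y; rfl])

lemma sum_fiber_mul_condMean (hν : ∀ x, 0 ≤ ν x) (f : Ω → ℝ) (x : Ω) :
    (∑ y with g y = g x, ν y) * condMean ν g f x = ∑ y with g y = g x, ν y * f y := by
  rw [condMean, ← sum_filter, ← sum_filter]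
  by_cases hmass : ∑ y with g y = g x, ν y = 0
  · have hzero := (sum_eq_zero_iff_of_nonneg fun y _ => hν y).1 hmass
    rw [hmass, zero_mul, sum_eq_zero fun y hy => by rw [hzero y hy, zero_mul]]
  · exact mul_div_cancel₀ _ hmass

lemma sum_mul_condMean_mul (hν : ∀ x, 0 ≤ ν x) (f F : Ω → ℝ)
    (hF : ∀ x y, g x = g y → F x = F y) :
    ∑ x, ν x * condMean ν g f x * F x = ∑ x, ν x * f x * F x := by
  refine sum_eq_sum_of_sum_fiber_eq g fun x => ?_
  calc ∑ y with g y = g x, ν y * condMean ν g f y * F y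
      = (∑ y with g y = g x, ν y) * condMean ν g f x * F x := by
        rw [sum_mul, sum_mul]
        refine sum_congr rfl fun y hy => ?_
        have hyx : g y = g x := (mem_filter.1 hy).2
        rw [condMean_eq_of_eq f hyx, hF y x hyx]
    _ = ∑ y with g y = g x, ν y * f y * F y := by
        rw [sum_fiber_mul_condMean hν, sum_mul]
        refine sum_congr rfl fun y hy => ?_
        rw [hF y x (mem_filter.1 hy).2]

lemma ent_condMean (hν : ∀ x, 0 ≤ ν x) (f : Ω → ℝ) :
    ent ν (condMean ν g f) = ent ν f - avgCondEnt ν g f := by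
  have hlog := sum_mul_condMean_mul (g := g) hν f (fun x => log (condMean ν g f x))
    fun x y h => by rw [condMean_eq_of_eq f h]
  have hmass := sum_mul_condMean_mul (g := g) hν f (fun _ => 1) fun _ _ _ => rfl
  simp only [mul_one] at hmass
  simp only [ent, avgCondEnt, mul_sub, sum_sub_distrib, hlog, hmass]
  ring

end ConditionalExpectation

section Convexity

lemma add_mul_log_div_add_le {a b c d : ℝ} (ha : 0 ≤ a) (hb : 0 ≤ b) (hc : 0 ≤ c) (hd : 0 ≤ d)
    (hca : c = 0 → a = 0) (hdb : d = 0 → b = 0) :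
    (a + b) * log ((a + b) / (c + d)) ≤ a * log (a / c) + b * log (b / d) := by
  rcases hc.eq_or_lt with rfl | hc
  · simp [hca rfl]
  rcases hd.eq_or_lt with rfl | hd
  · simp [hdb rfl]
  have hcd : 0 < c + d := add_pos hc hd
  -- Jensen for `t ↦ t log t` at the points `a/c`, `b/d` with weights `c/(c+d)`, `d/(c+d)`
  have hconv := convexOn_mul_log.2 (Set.mem_Ici.2 (div_nonneg ha hc.le))
    (Set.mem_Ici.2 (div_nonneg hb hd.le)) (div_nonneg hc.le hcd.le) (div_nonneg hd.le hcd.le)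
    (by rw [← add_div, div_self hcd.ne'])
  have hmix : c / (c + d) * (a / c) + d / (c + d) * (b / d) = (a + b) / (c + d) := by
    field_simp
  simp only [smul_eq_mul, hmix] at hconv
  calc (a + b) * log ((a + b) / (c + d))
      = (c + d) * ((a + b) / (c + d) * log ((a + b) / (c + d))) := by field_simp
    _ ≤ (c + d) * (c / (c + d) * (a / c * log (a / c)) + d / (c + d) * (b / d * log (b / d))) :=
        mul_le_mul_of_nonneg_left hconv hcd.le
    _ = a * log (a / c) + b * log (b / d) := by field_simp

lemma mul_log_div_convex_comb_le {a b u v m n : ℝ} (ha : 0 ≤ a) (hb : 0 ≤ b) (hu : 0 ≤ u)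
    (hv : 0 ≤ v) (hm : 0 ≤ m) (hn : 0 ≤ n) (hmu : m = 0 → u = 0) (hnv : n = 0 → v = 0) :
    (a * u + b * v) * log ((a * u + b * v) / (a * m + b * n)) ≤
      a * (u * log (u / m)) + b * (v * log (v / n)) := by
  have hscale : ∀ t w z : ℝ, t * w * log (t * w / (t * z)) = t * (w * log (w / z)) := by
    intro t w z
    rcases eq_or_ne t 0 with rfl | ht
    · simp
    · rw [mul_div_mul_left _ _ ht, mul_assoc]
  rw [← hscale a u m, ← hscale b v n]
  refine add_mul_log_div_add_le (mul_nonneg ha hu) (mul_nonneg hb hv) (mul_nonneg ha hm)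
    (mul_nonneg hb hn) (fun h0 => ?_) (fun h0 => ?_)
  · rcases mul_eq_zero.1 h0 with h0 | h0 <;> simp [h0, hmu]
  · rcases mul_eq_zero.1 h0 with h0 | h0 <;> simp [h0, hnv]

variable {Ω : Type*} [Fintype Ω] {ν : Ω → ℝ}

lemma ent_eq_sum_mul_log_div (hν : ∀ x, 0 ≤ ν x) {f : Ω → ℝ} (hf : ∀ x, 0 ≤ f x) :
    ent ν f = ∑ x, ν x * f x * log (f x / ∑ y, ν y * f y) := by
  rw [ent, sum_mul, ← sum_sub_distrib]
  refine sum_congr rfl fun x _ => ?_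
  by_cases hx : ν x * f x = 0
  · simp [hx]
  have hfx : f x ≠ 0 := right_ne_zero_of_mul hx
  have hmean : (∑ y, ν y * f y) ≠ 0 :=
    (lt_of_lt_of_le (lt_of_le_of_ne (mul_nonneg (hν x) (hf x)) (Ne.symm hx))
      (single_le_sum (fun y _ => mul_nonneg (hν y) (hf y)) (mem_univ x))).ne'
  rw [log_div hfx hmean]
  ring

lemma convexOn_ent (hν : ∀ x, 0 ≤ ν x) : ConvexOn ℝ (Set.Ici 0) (ent ν) := by
  refine ⟨convex_Ici 0, fun f hf h hh a b ha hb _ => ?_⟩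
  have hf : ∀ x, 0 ≤ f x := hf
  have hh : ∀ x, 0 ≤ h x := hh
  have hmix : ∀ x, 0 ≤ (a • f + b • h) x := fun x =>
    add_nonneg (mul_nonneg ha (hf x)) (mul_nonneg hb (hh x))
  have hmean : ∑ y, ν y * (a • f + b • h) y = a * ∑ y, ν y * f y + b * ∑ y, ν y * h y := by
    simp only [mul_sum, ← sum_add_distrib, Pi.add_apply, Pi.smul_apply, smul_eq_mul]
    exact sum_congr rfl fun y _ => by ring
  have hzero : ∀ {u : Ω → ℝ}, (∀ y, 0 ≤ u y) → ∀ x, ν x ≠ 0 →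
      ∑ y, ν y * u y = 0 → u x = 0 := fun hu x hx hsum =>
    (mul_eq_zero.1 ((sum_eq_zero_iff_of_nonneg fun y _ => mul_nonneg (hν y) (hu y)).1 hsum x
      (mem_univ x))).resolve_left hx
  rw [ent_eq_sum_mul_log_div hν hmix, ent_eq_sum_mul_log_div hν hf,
    ent_eq_sum_mul_log_div hν hh, hmean, smul_eq_mul, smul_eq_mul]
  calc _ ≤ ∑ x, (a * (ν x * f x * log (f x / ∑ y, ν y * f y)) +
        b * (ν x * h x * log (h x / ∑ y, ν y * h y))) := sum_le_sum fun x _ => ?_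
    _ = _ := by rw [sum_add_distrib, ← mul_sum, ← mul_sum]
  rcases eq_or_ne (ν x) 0 with hx | hx
  · simp [hx]
  have hcomb := mul_log_div_convex_comb_le ha hb (hf x) (hh x)
    (sum_nonneg fun y _ => mul_nonneg (hν y) (hf y))
    (sum_nonneg fun y _ => mul_nonneg (hν y) (hh y)) (hzero hf x hx) (hzero hh x hx)
  simp only [Pi.add_apply, Pi.smul_apply, smul_eq_mul]
  linear_combination mul_le_mul_of_nonneg_left hcomb (hν x)

lemma ent_midpoint_le (hν : ∀ x, 0 ≤ ν x) {f h : Ω → ℝ} (hf : ∀ x, 0 ≤ f x)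
    (hh : ∀ x, 0 ≤ h x) :
    ent ν (fun x => (f x + h x) / 2) ≤ (ent ν f + ent ν h) / 2 := by
  have hconv := (convexOn_ent hν).2 (Set.mem_Ici.2 (Pi.le_def.2 hf))
    (Set.mem_Ici.2 (Pi.le_def.2 hh)) (by norm_num : (0 : ℝ) ≤ 1 / 2)
    (by norm_num : (0 : ℝ) ≤ 1 / 2) (by norm_num)
  have hmid : (1 / 2 : ℝ) • f + (1 / 2 : ℝ) • h = fun x => (f x + h x) / 2 := by
    funext x
    simp only [Pi.add_apply, Pi.smul_apply, smul_eq_mul]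
    ring
  rw [hmid, smul_eq_mul, smul_eq_mul] at hconv
  linarith

end Convexity

lemma esMeasure_nonneg {V : Type*} [Fintype V] [DecidableEq V] (E : Finset (V × V)) (q : ℕ)
    {β : ℝ} (hβ : 0 ≤ β) (z : (V → Fin q) × Finset (V × V)) : 0 ≤ esMeasure E q β z := by
  have hp : 0 ≤ 1 - exp (-β) := sub_nonneg.2 (exp_le_one_iff.2 (neg_nonpos.2 hβ))
  have hweight : ∀ w, 0 ≤ esWeight E q β w := fun w => by
    unfold esWeight
    split_ifs <;> positivity
  exact div_nonneg (hweight z) (sum_nonneg fun w _ => hweight w)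

theorem stmt14_general {V : Type*} [Fintype V] [DecidableEq V]
    (E : Finset (V × V)) (q : ℕ) (β : ℝ) (hβ : 0 < β)
    (C : ℝ) (hC : 1 ≤ C)
    (hfact : ∀ f : ((V → Fin q) × Finset (V × V)) → ℝ, (∀ z, 0 ≤ f z) →
      ent (esMeasure E q β) f ≤
        C * (avgCondEnt (esMeasure E q β) Prod.fst f +
             avgCondEnt (esMeasure E q β) Prod.snd f)) :
    ∀ f : ((V → Fin q) × Finset (V × V)) → ℝ, (∀ z, 0 ≤ f z) →
      ent (esMeasure E q β)
        (fun z => (condMean (esMeasure E q β) Prod.snd f z +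
                   condMean (esMeasure E q β) Prod.fst f z) / 2) ≤
        (1 - 1 / (2 * C)) * ent (esMeasure E q β) f := by
  intro f hf
  set ν := esMeasure E q β
  have hν : ∀ z, 0 ≤ ν z := esMeasure_nonneg E q hβ.le
  have hconv := ent_midpoint_le hν (condMean_nonneg (g := Prod.snd) hν hf)
    (condMean_nonneg (g := Prod.fst) hν hf)
  rw [ent_condMean hν, ent_condMean hν] at hconv
  have hrate : ent ν f / (2 * C) ≤ (avgCondEnt ν Prod.fst f + avgCondEnt ν Prod.snd f) / 2 := by
    rw [div_le_iff₀ (by linarith)]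
    linarith [hfact f hf]
  have hsplit : (1 - 1 / (2 * C)) * ent ν f = ent ν f - ent ν f / (2 * C) := by ring
  linarith

/-- Spin/edge factorization with constant `C` for the Edwards–Sokal measure `ν` implies
entropy contraction at rate `1 - 1/(2C)` for the chain `P = (K+T)/2`, where
`Kf = ν[f|A]` resamples spins given edges and `Tf = ν[f|σ]` resamples edges given spins. -/
theorem stmt14 {V : Type*} [Fintype V] [DecidableEq V]
    (E : Finset (V × V)) (q : ℕ) (hq : 2 ≤ q) (β : ℝ) (hβ : 0 < β)
    (C : ℝ) (hC : 1 ≤ C)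
    (hfact : ∀ f : ((V → Fin q) × Finset (V × V)) → ℝ, (∀ z, 0 ≤ f z) →
      ent (esMeasure E q β) f ≤
        C * (avgCondEnt (esMeasure E q β) Prod.fst f +
             avgCondEnt (esMeasure E q β) Prod.snd f)) :
    ∀ f : ((V → Fin q) × Finset (V × V)) → ℝ, (∀ z, 0 ≤ f z) →
      ent (esMeasure E q β)
        (fun z => (condMean (esMeasure E q β) Prod.snd f z +
                   condMean (esMeasure E q β) Prod.fst f z) / 2) ≤
        (1 - 1 / (2 * C)) * ent (esMeasure E q β) f :=
  stmt14_general E q β hβ C hC hfact
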